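/- Let d ≥ 1 and let m be a real number with 0 ≤ m ≤ (1+√7)/2. Let h be a smooth, strictly positive solution on [0,T] of the Boussinesq equation ∂_t h − div(h ∇h) = 0 on 𝕋^d. Then for every t ∈ [0,T], (d/dt) ∫_{𝕋^d} h^m |∇h|^2 dx + (m/(m+1)) ∫_{𝕋^d} h^{m+1} (Δh)^2 dx + C_m ∫_{𝕋^d} h^{m-1} |∇h|^4 dx ≤ 0, where C_m = ((m+2)/(m+1)) · ((m+3)^2/36) − (m^2 − m + 2)/4, and moreover C_m ≥ 0 for all such m. -/

import Mathlib

open MeasureTheory Real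

/-- Partial derivative `∂ᵢ f` of a function on `ℝᵈ` (as `EuclideanSpace`). -/
noncomputable def pder {d : ℕ} (i : Fin d) (f : EuclideanSpace ℝ (Fin d) → ℝ)
    (x : EuclideanSpace ℝ (Fin d)) : ℝ :=
  fderiv ℝ f x (EuclideanSpace.single i 1)

/-- The Laplacian `Δ f = ∑ᵢ ∂ᵢ∂ᵢ f`. -/
noncomputable def lap {d : ℕ} (f : EuclideanSpace ℝ (Fin d) → ℝ)
    (x : EuclideanSpace ℝ (Fin d)) : ℝ :=
  ∑ i, pder i (pder i f) x

/-- Squared norm of the gradient, `|∇f|² = ∑ᵢ (∂ᵢ f)²`. -/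
noncomputable def gradSq {d : ℕ} (f : EuclideanSpace ℝ (Fin d) → ℝ)
    (x : EuclideanSpace ℝ (Fin d)) : ℝ :=
  ∑ i, (pder i f x) ^ 2

/-- Squared Frobenius norm of the Hessian, `|∇∇f|² = ∑ᵢⱼ (∂ᵢ∂ⱼ f)²`. -/
noncomputable def hessSq {d : ℕ} (f : EuclideanSpace ℝ (Fin d) → ℝ)
    (x : EuclideanSpace ℝ (Fin d)) : ℝ :=
  ∑ i, ∑ j, (pder i (pder j f) x) ^ 2

/-- The fundamental domain `[0,1)^d` of the torus `𝕋^d`. -/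
def fundDom (d : ℕ) : Set (EuclideanSpace ℝ (Fin d)) :=
  {x | ∀ i, 0 ≤ x i ∧ x i < 1}

/-- `ℤ^d`-periodicity of a function on `ℝ^d`. -/
def ZPeriodic {d : ℕ} (f : EuclideanSpace ℝ (Fin d) → ℝ) : Prop :=
  ∀ (x : EuclideanSpace ℝ (Fin d)) (k : Fin d → ℤ),
    f (x + (WithLp.equiv 2 (Fin d → ℝ)).symm (fun i => (k i : ℝ))) = f x

/-!
Write `u = h(t, ·)`, so that `∂ₜh = div(u∇u) = |∇u|² + uΔu`. Differentiating under the integral,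
`d/dt ∫ uᵐ|∇u|²` is an explicit integral of `u` and its derivatives. On the torus the divergence of
a periodic field integrates to zero (the boundary terms of the divergence theorem on `[0,1]^d`
cancel), and the three fields `uᵐ ∂ₜu ∇u`, `uᵐ|∇u|²∇u` and `u^{m+1}(Δu ∇u − ∇²u ∇u)` have
divergences that, in suitable proportions, exceed the whole integrand of the claim by
`(m+2)/(27(m+1)) · u^{m-1} Q`, where
`Q = 9u²(Δu)² + 3m²|∇u|⁴ + 18u²|∇²u|² + 6m u Δu |∇u|² + 12m u ∇u·∇²u∇u`.
Pointwise, `Q ≥ 0` by `(∇u·∇²u∇u)² ≤ |∇²u|²|∇u|⁴` and AM-GM. Finally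
`C_m = m(3 + 2m − 2m²)/(9(m+1))`, which is nonnegative for `0 ≤ m ≤ (1+√7)/2`.
-/

open scoped ContDiff

section PartialDerivatives

variable {d : ℕ} {f g : EuclideanSpace ℝ (Fin d) → ℝ} {x : EuclideanSpace ℝ (Fin d)}

lemma HasFDerivAt.pder_eq {f' : EuclideanSpace ℝ (Fin d) →L[ℝ] ℝ} (hf : HasFDerivAt f f' x)
    (i : Fin d) :
    pder i f x = f' (EuclideanSpace.single i 1) := by
  rw [pder, hf.fderiv]

lemma pder_sub (hf : DifferentiableAt ℝ f x) (hg : DifferentiableAt ℝ g x) (i : Fin d) :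
    pder i (fun y => f y - g y) x = pder i f x - pder i g x :=
  (hf.hasFDerivAt.sub hg.hasFDerivAt).pder_eq i

lemma pder_const_mul (hf : DifferentiableAt ℝ f x) (c : ℝ) (i : Fin d) :
    pder i (fun y => c * f y) x = c * pder i f x := by
  rw [(hf.hasFDerivAt.const_mul c).pder_eq i]; rfl

lemma pder_mul (hf : DifferentiableAt ℝ f x) (hg : DifferentiableAt ℝ g x) (i : Fin d) :
    pder i (fun y => f y * g y) x = pder i f x * g x + f x * pder i g x := by
  have hfg : HasFDerivAt (fun y => f y * g y) _ x := hf.hasFDerivAt.mul hg.hasFDerivAt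
  rw [hfg.pder_eq i, pder, pder]
  simp only [add_apply, smul_apply, smul_eq_mul]
  ring

lemma pder_sum {ι : Type*} (s : Finset ι) {F : ι → EuclideanSpace ℝ (Fin d) → ℝ}
    (hF : ∀ j ∈ s, DifferentiableAt ℝ (F j) x) (i : Fin d) :
    pder i (fun y => ∑ j ∈ s, F j y) x = ∑ j ∈ s, pder i (F j) x := by
  rw [(HasFDerivAt.fun_sum fun j hj => (hF j hj).hasFDerivAt).pder_eq i]
  simp [pder]

lemma pder_rpow_const (hf : DifferentiableAt ℝ f x) (hx : f x ≠ 0) (p : ℝ) (i : Fin d) :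
    pder i (fun y => f y ^ p) x = p * f x ^ (p - 1) * pder i f x := by
  have hfp : HasFDerivAt (fun y => f y ^ p) _ x :=
    (Real.hasDerivAt_rpow_const (Or.inl hx)).comp_hasFDerivAt x hf.hasFDerivAt
  rw [hfp.pder_eq i]
  simp [pder, mul_assoc]

lemma pder_pow (hf : DifferentiableAt ℝ f x) (n : ℕ) (i : Fin d) :
    pder i (fun y => f y ^ n) x = n * f x ^ (n - 1) * pder i f x := by
  have hfn : HasFDerivAt (fun y => f y ^ n) _ x :=
    (hasDerivAt_pow n (f x)).comp_hasFDerivAt x hf.hasFDerivAt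
  rw [hfn.pder_eq i]
  simp [pder, mul_assoc]

lemma fderiv_fderiv_apply_comm {V : Type*} [NormedAddCommGroup V] [NormedSpace ℝ V]
    {f : V → ℝ} {x : V} (hf : ContDiffAt ℝ 2 f x) (v w : V) :
    fderiv ℝ (fun y => fderiv ℝ f y v) x w = fderiv ℝ (fun y => fderiv ℝ f y w) x v := by
  have hdf : DifferentiableAt ℝ (fderiv ℝ f) x :=
    (hf.fderiv_right (m := 1) (by norm_num)).differentiableAt (by norm_num)
  rw [fderiv_clm_apply hdf (differentiableAt_const v),
    fderiv_clm_apply hdf (differentiableAt_const w)]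
  simpa using (hf.isSymmSndFDerivAt (by simp)).eq w v

lemma pder_comm (hf : ContDiffAt ℝ 2 f x) (i j : Fin d) :
    pder i (pder j f) x = pder j (pder i f) x :=
  fderiv_fderiv_apply_comm hf _ _

@[fun_prop]
lemma ContDiff.pder (hf : ContDiff ℝ ∞ f) (i : Fin d) : ContDiff ℝ ∞ (pder i f) :=
  (hf.fderiv_right le_rfl).clm_apply contDiff_const

end PartialDerivatives

section VectorCalculus

variable {d : ℕ}

noncomputable def gradInner (f g : EuclideanSpace ℝ (Fin d) → ℝ)
    (x : EuclideanSpace ℝ (Fin d)) : ℝ :=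
  ∑ i, pder i f x * pder i g x

noncomputable def hessQuad (u : EuclideanSpace ℝ (Fin d) → ℝ)
    (x : EuclideanSpace ℝ (Fin d)) : ℝ :=
  ∑ i, ∑ j, pder i u x * pder j u x * pder i (pder j u) x

noncomputable def divergence (F : Fin d → EuclideanSpace ℝ (Fin d) → ℝ)
    (x : EuclideanSpace ℝ (Fin d)) : ℝ :=
  ∑ i, pder i (F i) x

noncomputable def boussinesqRHS (u : EuclideanSpace ℝ (Fin d) → ℝ)
    (x : EuclideanSpace ℝ (Fin d)) : ℝ :=
  gradSq u x + u x * lap u x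

variable {u φ : EuclideanSpace ℝ (Fin d) → ℝ} {x : EuclideanSpace ℝ (Fin d)}

@[fun_prop]
lemma ContDiff.gradSq (hu : ContDiff ℝ ∞ u) : ContDiff ℝ ∞ (gradSq u) := by
  unfold _root_.gradSq; fun_prop

@[fun_prop]
lemma ContDiff.lap (hu : ContDiff ℝ ∞ u) : ContDiff ℝ ∞ (lap u) := by
  unfold _root_.lap; fun_prop

@[fun_prop]
lemma ContDiff.gradInner (hu : ContDiff ℝ ∞ u) (hφ : ContDiff ℝ ∞ φ) :
    ContDiff ℝ ∞ (gradInner u φ) := by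
  unfold _root_.gradInner; fun_prop

@[fun_prop]
lemma ContDiff.boussinesqRHS (hu : ContDiff ℝ ∞ u) : ContDiff ℝ ∞ (boussinesqRHS u) := by
  unfold _root_.boussinesqRHS; fun_prop

lemma gradInner_comm (f g : EuclideanSpace ℝ (Fin d) → ℝ) (x : EuclideanSpace ℝ (Fin d)) :
    gradInner f g x = gradInner g f x := by
  simp only [gradInner, mul_comm]

lemma gradInner_self (u : EuclideanSpace ℝ (Fin d) → ℝ) (x : EuclideanSpace ℝ (Fin d)) :
    gradInner u u x = gradSq u x := by
  simp only [gradInner, gradSq, sq]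

lemma hessSq_nonneg (u : EuclideanSpace ℝ (Fin d) → ℝ) (x : EuclideanSpace ℝ (Fin d)) :
    0 ≤ hessSq u x :=
  Finset.sum_nonneg fun _ _ => Finset.sum_nonneg fun _ _ => sq_nonneg _

lemma hessQuad_sq_le (u : EuclideanSpace ℝ (Fin d) → ℝ) (x : EuclideanSpace ℝ (Fin d)) :
    hessQuad u x ^ 2 ≤ hessSq u x * gradSq u x ^ 2 := by
  have hcs := Finset.sum_mul_sq_le_sq_mul_sq (Finset.univ ×ˢ Finset.univ)
    (fun ij : Fin d × Fin d => pder ij.1 u x * pder ij.2 u x)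
    (fun ij => pder ij.1 (pder ij.2 u) x)
  simp only [Finset.sum_product, mul_pow, ← Finset.mul_sum, ← Finset.sum_mul] at hcs
  simpa only [hessQuad, hessSq, gradSq, sq, mul_comm (∑ i, ∑ j, _ * _)] using hcs

lemma divergence_sub {F G : Fin d → EuclideanSpace ℝ (Fin d) → ℝ}
    (hF : ∀ i, DifferentiableAt ℝ (F i) x) (hG : ∀ i, DifferentiableAt ℝ (G i) x) :
    divergence (fun i y => F i y - G i y) x = divergence F x - divergence G x := by
  simp only [divergence, pder_sub (hF _) (hG _), Finset.sum_sub_distrib]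

lemma divergence_const_mul {F : Fin d → EuclideanSpace ℝ (Fin d) → ℝ}
    (hF : ∀ i, DifferentiableAt ℝ (F i) x) (c : ℝ) :
    divergence (fun i y => c * F i y) x = c * divergence F x := by
  simp only [divergence, pder_const_mul (hF _), Finset.mul_sum]

lemma divergence_mul {F : Fin d → EuclideanSpace ℝ (Fin d) → ℝ}
    (hφ : DifferentiableAt ℝ φ x) (hF : ∀ i, DifferentiableAt ℝ (F i) x) :
    divergence (fun i y => φ y * F i y) x
      = ∑ i, pder i φ x * F i x + φ x * divergence F x := by
  simp only [divergence, pder_mul hφ (hF _), Finset.sum_add_distrib, Finset.mul_sum]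

lemma divergence_mul_grad (hφ : DifferentiableAt ℝ φ x)
    (hu : ∀ i, DifferentiableAt ℝ (pder i u) x) :
    divergence (fun i y => φ y * pder i u y) x = gradInner φ u x + φ x * lap u x :=
  divergence_mul hφ hu

lemma divergence_mul_grad_self (hu : ContDiff ℝ ∞ u) (x : EuclideanSpace ℝ (Fin d)) :
    divergence (fun i y => u y * pder i u y) x = boussinesqRHS u x := by
  rw [divergence_mul_grad (hu.differentiable (by simp) x)
    fun i => (hu.pder i).differentiable (by simp) x, gradInner_self, boussinesqRHS]

lemma gradInner_rpow_mul {ψ : EuclideanSpace ℝ (Fin d) → ℝ} (hu : DifferentiableAt ℝ u x)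
    (hψ : DifferentiableAt ℝ ψ x) (hx : u x ≠ 0) (m : ℝ) :
    gradInner (fun y => u y ^ m * ψ y) u x
      = m * u x ^ (m - 1) * ψ x * gradSq u x + u x ^ m * gradInner ψ u x := by
  simp only [gradInner, gradSq, pder_mul (hu.rpow_const (Or.inl hx)) hψ,
    pder_rpow_const hu hx, Finset.mul_sum, ← Finset.sum_add_distrib]
  exact Finset.sum_congr rfl fun i _ => by ring

lemma pder_gradSq (hu : ∀ j, DifferentiableAt ℝ (pder j u) x) (i : Fin d) :
    pder i (gradSq u) x = 2 * ∑ j, pder j u x * pder i (pder j u) x := by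
  rw [show gradSq u = fun y => ∑ j, pder j u y ^ 2 from rfl,
    pder_sum (F := fun j y => pder j u y ^ 2) _ fun j _ => (hu j).pow 2]
  simp only [pder_pow (hu _), Finset.mul_sum]
  exact Finset.sum_congr rfl fun j _ => by push_cast; ring

lemma gradInner_gradSq (hu : ∀ j, DifferentiableAt ℝ (pder j u) x) :
    gradInner (gradSq u) u x = 2 * hessQuad u x := by
  simp only [gradInner, hessQuad, pder_gradSq hu, Finset.mul_sum, Finset.sum_mul]
  exact Finset.sum_congr rfl fun i _ => Finset.sum_congr rfl fun j _ => by ring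

lemma pder_pder_pder_comm (hu : ContDiff ℝ ∞ u) (i j : Fin d) (x : EuclideanSpace ℝ (Fin d)) :
    pder i (pder j (pder j u)) x = pder j (pder j (pder i u)) x := by
  have hij : pder i (pder j u) = pder j (pder i u) :=
    funext fun y => pder_comm (hu.contDiffAt.of_le (WithTop.coe_le_coe.2 le_top)) i j
  rw [pder_comm ((hu.pder j).contDiffAt.of_le (WithTop.coe_le_coe.2 le_top)) i j, hij]

lemma divergence_gradLap_sub_hessGrad (hu : ContDiff ℝ ∞ u) (x : EuclideanSpace ℝ (Fin d)) :
    divergence (fun i y => pder i u y * lap u y - ∑ j, pder j u y * pder i (pder j u) y) x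
      = lap u x ^ 2 - hessSq u x := by
  have d1 : ∀ i, DifferentiableAt ℝ (pder i u) x := fun i =>
    (hu.pder i).differentiable (by simp) x
  have d2 : ∀ i j, DifferentiableAt ℝ (pder i (pder j u)) x :=
    fun i j => ((hu.pder j).pder i).differentiable (by simp) x
  have dl : DifferentiableAt ℝ (lap u) x := hu.lap.differentiable (by simp) x
  have hlap : ∀ i, pder i (lap u) x = ∑ j, pder i (pder j (pder j u)) x := fun i =>
    pder_sum (F := fun j => pder j (pder j u)) _ (fun j _ => d2 j j) i
  have hsum : ∀ i, pder i (fun y => ∑ j, pder j u y * pder i (pder j u) y) x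
      = ∑ j, (pder i (pder j u) x * pder i (pder j u) x
        + pder j u x * pder i (pder i (pder j u)) x) := fun i => by
    rw [pder_sum (F := fun j y => pder j u y * pder i (pder j u) y) _
      fun j _ => (d1 j).fun_mul (d2 i j)]
    simp only [pder_mul (d1 _) (d2 _ _)]
  -- the third-order terms cancel by symmetry of the third derivatives
  have third : ∑ i, ∑ j, pder i u x * pder i (pder j (pder j u)) x
      = ∑ i, ∑ j, pder j u x * pder i (pder i (pder j u)) x := by
    rw [Finset.sum_comm]
    simp only [pder_pder_pder_comm hu]
  have hterm : ∀ i, pder i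
        (fun y => pder i u y * lap u y - ∑ j, pder j u y * pder i (pder j u) y) x
      = pder i (pder i u) x * lap u x + ∑ j, pder i u x * pder i (pder j (pder j u)) x
        - ∑ j, (pder i (pder j u) x ^ 2 + pder j u x * pder i (pder i (pder j u)) x) := by
    intro i
    rw [pder_sub ((d1 i).fun_mul dl) (DifferentiableAt.fun_sum fun j _ => (d1 j).fun_mul (d2 i j)),
      pder_mul (d1 i) dl, hlap, hsum, Finset.mul_sum]
    simp only [sq]
  simp only [divergence, hterm, Finset.sum_sub_distrib, Finset.sum_add_distrib, third]
  rw [← Finset.sum_mul]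
  simp only [lap, hessSq]
  ring

lemma sum_pder_mul_gradLap_sub_hessGrad (u : EuclideanSpace ℝ (Fin d) → ℝ)
    (x : EuclideanSpace ℝ (Fin d)) :
    ∑ i, pder i u x * (pder i u x * lap u x - ∑ j, pder j u x * pder i (pder j u) x)
      = gradSq u x * lap u x - hessQuad u x := by
  simp only [mul_sub, Finset.sum_sub_distrib, gradSq, hessQuad, Finset.sum_mul, Finset.mul_sum]
  congr 1
  · exact Finset.sum_congr rfl fun i _ => by ring
  · exact Finset.sum_congr rfl fun i _ => Finset.sum_congr rfl fun j _ => by ring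

end VectorCalculus

section Torus

variable {d : ℕ}

lemma ZPeriodic.pder {f : EuclideanSpace ℝ (Fin d) → ℝ} (hf : Differentiable ℝ f)
    (hper : ZPeriodic f) (i : Fin d) :
    ZPeriodic (pder i f) := by
  intro x k
  set c := (WithLp.equiv 2 (Fin d → ℝ)).symm fun i => (k i : ℝ)
  have hshift : HasFDerivAt (fun y => f (y + c)) (fderiv ℝ f (x + c)) x :=
    (hf (x + c)).hasFDerivAt.comp x ((hasFDerivAt_id x).add_const c)
  unfold _root_.pder
  rw [← hshift.fderiv, show (fun y => f (y + c)) = f from funext fun y => hper y k]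

lemma measurableSet_fundDom : MeasurableSet (fundDom d) := by
  rw [show fundDom d = WithLp.ofLp ⁻¹' Set.univ.pi fun _ => Set.Ico (0 : ℝ) 1 by
    ext x; simp [fundDom, Set.mem_pi]]
  exact (MeasurableSet.univ_pi fun _ => measurableSet_Ico).preimage
    (PiLp.continuous_ofLp 2 _).measurable

lemma fundDom_subset_toLp_Icc : fundDom d ⊆ WithLp.toLp 2 '' Set.Icc 0 1 :=
  fun x hx => ⟨WithLp.ofLp x, ⟨fun i => (hx i).1, fun i => (hx i).2.le⟩, by simp⟩

lemma isCompact_toLp_Icc : IsCompact (WithLp.toLp 2 '' Set.Icc (0 : Fin d → ℝ) 1) :=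
  isCompact_Icc.image (PiLp.continuous_toLp 2 _)

lemma Continuous.integrableOn_fundDom {f : EuclideanSpace ℝ (Fin d) → ℝ} (hf : Continuous f) :
    IntegrableOn f (fundDom d) :=
  (hf.continuousOn.integrableOn_compact isCompact_toLp_Icc).mono_set fundDom_subset_toLp_Icc

lemma insertNth_one_eq_add_single {n : ℕ} (i : Fin (n + 1)) (y : Fin n → ℝ) :
    (i.insertNth (1 : ℝ) y : Fin (n + 1) → ℝ) = i.insertNth 0 y + Pi.single i 1 := by
  funext j
  rcases eq_or_ne j i with rfl | hj
  · simp
  · obtain ⟨k, rfl⟩ := Fin.exists_succAbove_eq hj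
    simp

/-- The boundary terms of the divergence theorem on `[0,1]^d` cancel in pairs by periodicity. -/
theorem integral_fundDom_divergence_eq_zero {F : Fin d → EuclideanSpace ℝ (Fin d) → ℝ}
    (hF : ∀ i, ContDiff ℝ 1 (F i)) (hper : ∀ i, ZPeriodic (F i)) :
    ∫ x in fundDom d, divergence F x = 0 := by
  cases d with
  | zero => simp [divergence]
  | succ n =>
  set L := (PiLp.continuousLinearEquiv 2 ℝ fun _ : Fin (n + 1) => ℝ).symm.toContinuousLinearMap
  have hL : ⇑L = WithLp.toLp 2 := rfl
  have hdF : ∀ i y, HasFDerivAt (fun y => F i (L y)) ((fderiv ℝ (F i) (L y)).comp L) y :=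
    fun i y => ((hF i).differentiable one_ne_zero (L y)).hasFDerivAt.comp y L.hasFDerivAt
  have hpull : ∫ x in fundDom (n + 1), divergence F x
      = ∫ y in Set.Icc 0 1, ∑ i, (fderiv ℝ (F i) (L y)).comp L (Pi.single i 1) := by
    have hpre : ⇑L ⁻¹' fundDom (n + 1) = Set.univ.pi fun _ => Set.Ico 0 1 := by
      ext y; simp [fundDom, Set.mem_pi, hL]
    rw [← (PiLp.volume_preserving_toLp (Fin (n + 1))).setIntegral_preimage_emb
      (MeasurableEquiv.toLp 2 (Fin (n + 1) → ℝ)).measurableEmbedding, ← hL, hpre]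
    exact setIntegral_congr_set Measure.univ_pi_Ico_ae_eq_Icc
  have hcont : Continuous fun y => ∑ i, (fderiv ℝ (F i) (L y)).comp L (Pi.single i 1) :=
    continuous_finsetSum _ fun i _ =>
      (((hF i).continuous_fderiv one_ne_zero).clm_apply continuous_const).comp L.continuous
  rw [hpull, integral_divergence_of_hasFDerivAt_off_countable' 0 1 (fun _ => zero_le_one) _ _ ∅
    Set.countable_empty (fun i => ((hF i).continuous.comp L.continuous).continuousOn)
    (fun y _ i => hdF i y) hcont.integrableOn_Icc]
  refine Finset.sum_eq_zero fun i _ => sub_eq_zero.2 <|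
    setIntegral_congr_fun measurableSet_Icc fun y _ => ?_
  have hshift : L (i.insertNth 1 y) = L (i.insertNth 0 y)
      + (WithLp.equiv 2 _).symm fun j => ((Pi.single i 1 : Fin (n + 1) → ℤ) j : ℝ) := by
    rw [insertNth_one_eq_add_single, map_add, hL, WithLp.equiv_symm_apply]
    congr 2
    funext j
    rcases eq_or_ne j i with rfl | hj <;> simp [*]
  show F i (L (i.insertNth 1 y)) = F i (L (i.insertNth 0 y))
  rw [hshift, hper]

end Torus

section TimeDerivative

lemma hasDerivAt_slice {E : Type*} [NormedAddCommGroup E] [NormedSpace ℝ E] {F : ℝ × E → ℝ}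
    {t : ℝ} {x : E} (hF : DifferentiableAt ℝ F (t, x)) :
    HasDerivAt (fun τ => F (τ, x)) (fderiv ℝ F (t, x) (1, 0)) t :=
  hF.hasFDerivAt.comp_hasDerivAt t ((hasDerivAt_id t).prodMk (hasDerivAt_const t x))

theorem hasDerivAt_setIntegral_of_contDiff {E : Type*} [NormedAddCommGroup E] [NormedSpace ℝ E]
    [MeasurableSpace E] [OpensMeasurableSpace E] {μ : Measure E} [IsFiniteMeasureOnCompacts μ]
    {s K : Set E} (hs : MeasurableSet s) (hK : IsCompact K) (hsK : s ⊆ K)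
    {F : ℝ × E → ℝ} (hF : ContDiff ℝ 1 F) (t : ℝ) :
    HasDerivAt (fun τ => ∫ x in s, F (τ, x) ∂μ)
      (∫ x in s, deriv (fun τ => F (τ, x)) t ∂μ) t := by
  have hF' : Continuous fun p => fderiv ℝ F p (1, 0) :=
    (hF.continuous_fderiv one_ne_zero).clm_apply continuous_const
  have hslice : ∀ {G : ℝ × E → ℝ}, Continuous G → ∀ τ, Continuous (G ⟨τ, ·⟩) :=
    fun hG τ => hG.comp (continuous_const.prodMk continuous_id)
  have hderiv : ∀ τ x, HasDerivAt (fun τ => F (τ, x)) (fderiv ℝ F (τ, x) (1, 0)) τ :=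
    fun τ x => hasDerivAt_slice (hF.differentiable one_ne_zero (τ, x))
  obtain ⟨C, hC⟩ :=
    ((isCompact_Icc (a := t - 1) (b := t + 1)).prod hK).exists_bound_of_continuousOn
      hF'.continuousOn
  simp only [fun x => (hderiv t x).deriv]
  refine (hasDerivAt_integral_of_dominated_loc_of_deriv_le (F := fun τ x => F (τ, x))
    (F' := fun τ x => fderiv ℝ F (τ, x) (1, 0)) (bound := fun _ => C)
    (Metric.ball_mem_nhds t one_pos)
    (.of_forall fun τ => (hslice hF.continuous τ).aestronglyMeasurable)
    (((hslice hF.continuous t).continuousOn.integrableOn_compact hK).mono_set hsK)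
    (hslice hF' t).aestronglyMeasurable ?_ (integrableOn_const (hK.measure_lt_top.trans_le'
      (measure_mono hsK)).ne) (.of_forall fun x τ _ => hderiv τ x)).2
  refine (ae_restrict_iff' hs).2 (.of_forall fun x hx τ hτ => hC (τ, x) ⟨?_, hsK hx⟩)
  rw [Metric.mem_ball, Real.dist_eq, abs_lt] at hτ
  exact ⟨by linarith, by linarith⟩

variable {d : ℕ} {h : ℝ × EuclideanSpace ℝ (Fin d) → ℝ}

lemma pder_slice {s : ℝ} {x : EuclideanSpace ℝ (Fin d)} (hh : DifferentiableAt ℝ h (s, x))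
    (i : Fin d) :
    pder i (fun y => h (s, y)) x = fderiv ℝ h (s, x) (0, EuclideanSpace.single i 1) := by
  have hcomp : HasFDerivAt (fun y => h (s, y))
      ((fderiv ℝ h (s, x)).comp ((0 : EuclideanSpace ℝ (Fin d) →L[ℝ] ℝ).prod (.id ℝ _)))
      x :=
    hh.hasFDerivAt.comp x ((hasFDerivAt_const s x).prodMk (hasFDerivAt_id x))
  simp [hcomp.pder_eq]

lemma hasDerivAt_pder_slice (hh : ContDiff ℝ 2 h) (t : ℝ) (x : EuclideanSpace ℝ (Fin d))
    (i : Fin d) :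
    HasDerivAt (fun s => pder i (fun y => h (s, y)) x)
      (pder i (fun y => deriv (fun s => h (s, y)) t) x) t := by
  have hd : ∀ p, DifferentiableAt ℝ h p := hh.differentiable (by simp)
  have hd' : ∀ v, Differentiable ℝ fun p => fderiv ℝ h p v := fun v =>
    ((hh.fderiv_right (m := 1) (by norm_num)).clm_apply contDiff_const).differentiable (by simp)
  have htime : (fun y => deriv (fun s => h (s, y)) t) = fun y => fderiv ℝ h (t, y) (1, 0) :=
    funext fun y => (hasDerivAt_slice (hd (t, y))).deriv
  rw [funext fun s => pder_slice (hd (s, x)) i, htime, pder_slice (hd' _ (t, x)),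
    ← fderiv_fderiv_apply_comm hh.contDiffAt]
  exact hasDerivAt_slice (hd' _ (t, x))

lemma hasDerivAt_rpow_mul_gradSq_slice (hh : ContDiff ℝ 2 h) (hpos : ∀ t x, 0 < h (t, x))
    (m t : ℝ) (x : EuclideanSpace ℝ (Fin d)) :
    HasDerivAt (fun s => h (s, x) ^ m * gradSq (fun y => h (s, y)) x)
      (m * h (t, x) ^ (m - 1) * deriv (fun s => h (s, x)) t * gradSq (fun y => h (t, y)) x
        + 2 * h (t, x) ^ m
          * gradInner (fun y => h (t, y)) (fun y => deriv (fun s => h (s, y)) t) x) t := by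
  have htime : HasDerivAt (fun s => h (s, x)) (deriv (fun s => h (s, x)) t) t :=
    (hasDerivAt_slice (hh.differentiable (by simp) (t, x))).differentiableAt.hasDerivAt
  have hgrad : HasDerivAt (fun s => gradSq (fun y => h (s, y)) x)
      (∑ i, 2 * pder i (fun y => h (t, y)) x
        * pder i (fun y => deriv (fun s => h (s, y)) t) x) t := by
    refine (HasDerivAt.fun_sum fun i _ => (hasDerivAt_pder_slice hh t x i).pow 2).congr_deriv ?_
    refine Finset.sum_congr rfl fun i _ => ?_
    norm_num
  refine ((htime.rpow_const (p := m) (Or.inl (hpos t x).ne')).fun_mul hgrad).congr_deriv ?_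
  simp only [gradInner, Finset.mul_sum]
  ring_nf

lemma contDiff_rpow_mul_gradSq_slice (hh : ContDiff ℝ ∞ h) (hpos : ∀ t x, 0 < h (t, x))
    (m : ℝ) :
    ContDiff ℝ ∞ fun p : ℝ × EuclideanSpace ℝ (Fin d) =>
      h p ^ m * gradSq (fun y => h (p.1, y)) p.2 := by
  have hslice : (fun p : ℝ × EuclideanSpace ℝ (Fin d) => gradSq (fun y => h (p.1, y)) p.2)
      = fun p => ∑ i, fderiv ℝ h p (0, EuclideanSpace.single i 1) ^ 2 :=
    funext fun p => Finset.sum_congr rfl fun i _ => by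
      rw [pder_slice (hh.differentiable (by simp) _)]
  have hD : ∀ v, ContDiff ℝ ∞ fun p => fderiv ℝ h p v := fun v =>
    (hh.fderiv_right le_rfl).clm_apply contDiff_const
  exact (hh.rpow_const_of_ne fun p => (hpos p.1 p.2).ne').mul
    (hslice ▸ ContDiff.sum fun i _ => (hD _).pow 2)

end TimeDerivative

lemma dissipation_form_nonneg {a m g L S H : ℝ} (hS : 0 ≤ S) (hH : H ^ 2 ≤ S * g ^ 2) :
    0 ≤ 9 * a ^ 2 * L ^ 2 + 3 * m ^ 2 * g ^ 2 + 18 * a ^ 2 * S + 6 * m * a * L * g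
      + 12 * m * a * H := by
  -- AM-GM and `H² ≤ S g²` give `g² (2 m² g² + 18 a² S + 12 m a H) ≥ 2 (m g² + 3 a H)²`.
  have hrest : 0 ≤ 2 * m ^ 2 * g ^ 2 + 18 * a ^ 2 * S + 12 * m * a * H := by
    rcases eq_or_ne g 0 with rfl | hg
    · have : H = 0 :=
        pow_eq_zero_iff two_ne_zero |>.1 (le_antisymm (by simpa using hH) (sq_nonneg H))
      subst this; nlinarith [mul_nonneg (sq_nonneg a) hS]
    · refine nonneg_of_mul_nonneg_right ?_ (by positivity : 0 < g ^ 2)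
      nlinarith [sq_nonneg (m * g ^ 2 + 3 * a * H), mul_le_mul_of_nonneg_left hH (sq_nonneg a)]
  nlinarith [sq_nonneg (3 * a * L + m * g)]

lemma boussinesqConst_nonneg {m : ℝ} (hm1 : 0 ≤ m) (hm2 : m ≤ (1 + √7) / 2) :
    0 ≤ ((m + 2) / (m + 1)) * ((m + 3) ^ 2 / 36) - (m ^ 2 - m + 2) / 4 := by
  have h7 : √7 ^ 2 = 7 := Real.sq_sqrt (by norm_num)
  have h71 : 1 ≤ √7 := by nlinarith [Real.sqrt_nonneg 7]
  -- `3 + 2m - 2m²` has roots `(1 ± √7) / 2`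
  have hq : 0 ≤ 3 + 2 * m - 2 * m ^ 2 := by
    nlinarith [mul_nonneg (sub_nonneg.2 hm2) (by linarith : 0 ≤ m - (1 - √7) / 2)]
  have hm : m + 1 ≠ 0 := by linarith
  rw [show ((m + 2) / (m + 1)) * ((m + 3) ^ 2 / 36) - (m ^ 2 - m + 2) / 4
      = m * (3 + 2 * m - 2 * m ^ 2) / (9 * (m + 1)) by field_simp; ring]
  positivity

section Dissipation

variable {d : ℕ} {u : EuclideanSpace ℝ (Fin d) → ℝ}

noncomputable def energyFlux (u : EuclideanSpace ℝ (Fin d) → ℝ) (m : ℝ) :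
    Fin d → EuclideanSpace ℝ (Fin d) → ℝ :=
  fun i y => 2 * (u y ^ m * boussinesqRHS u y * pder i u y)
    - (m + 2) * (m + 3) / (9 * (m + 1)) * (u y ^ m * gradSq u y * pder i u y)
    - 2 * (m + 2) / (3 * (m + 1)) * (u y ^ (m + 1)
        * (pder i u y * lap u y - ∑ j, pder j u y * pder i (pder j u) y))

lemma contDiff_energyFlux (hu : ContDiff ℝ ∞ u) (hpos : ∀ x, 0 < u x) (m : ℝ) (i : Fin d) :
    ContDiff ℝ ∞ (energyFlux u m i) := by
  unfold energyFlux; fun_prop (disch := exact fun x => (hpos x).ne')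

lemma ZPeriodic.energyFlux (hu : ContDiff ℝ ∞ u) (hper : ZPeriodic u) (m : ℝ) (i : Fin d) :
    ZPeriodic (energyFlux u m i) := by
  have h1 := fun j => hper.pder (hu.differentiable (by simp)) j
  have h2 := fun j k => (h1 k).pder ((hu.pder k).differentiable (by simp)) j
  unfold ZPeriodic at *
  intro x k
  simp only [_root_.energyFlux, boussinesqRHS, gradSq, lap, hper, h1, h2]

lemma divergence_rpow_mul_mul_grad {ψ : EuclideanSpace ℝ (Fin d) → ℝ} (hu : ContDiff ℝ ∞ u)
    (hψ : ContDiff ℝ ∞ ψ) {x : EuclideanSpace ℝ (Fin d)} (hx : u x ≠ 0) (m : ℝ) :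
    divergence (fun i y => u y ^ m * ψ y * pder i u y) x
      = m * u x ^ (m - 1) * ψ x * gradSq u x + u x ^ m * gradInner ψ u x
        + u x ^ m * ψ x * lap u x := by
  have hdu := hu.differentiable (by simp) x
  have hdψ := hψ.differentiable (by simp) x
  rw [divergence_mul_grad ((hdu.rpow_const (Or.inl hx)).fun_mul hdψ)
    fun i => (hu.pder i).differentiable (by simp) x, gradInner_rpow_mul hdu hdψ hx]

lemma divergence_rpow_mul_gradLap_sub_hessGrad (hu : ContDiff ℝ ∞ u)
    {x : EuclideanSpace ℝ (Fin d)} (hx : u x ≠ 0) (m : ℝ) :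
    divergence (fun i y => u y ^ (m + 1)
        * (pder i u y * lap u y - ∑ j, pder j u y * pder i (pder j u) y)) x
      = (m + 1) * u x ^ m * (gradSq u x * lap u x - hessQuad u x)
        + u x ^ (m + 1) * (lap u x ^ 2 - hessSq u x) := by
  have hdu := hu.differentiable (by simp) x
  rw [divergence_mul (hdu.rpow_const (Or.inl hx)) fun i =>
      (by fun_prop : ContDiff ℝ ∞ _).differentiable (by simp) x,
    divergence_gradLap_sub_hessGrad hu]
  simp only [pder_rpow_const hdu hx, add_sub_cancel_right, ← sum_pder_mul_gradLap_sub_hessGrad,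
    Finset.mul_sum, mul_assoc]

lemma energyDensity_le_divergence_energyFlux (hu : ContDiff ℝ ∞ u) (hpos : ∀ x, 0 < u x)
    {m : ℝ} (hm : -1 < m) (x : EuclideanSpace ℝ (Fin d)) :
    m * u x ^ (m - 1) * boussinesqRHS u x * gradSq u x
        + 2 * u x ^ m * gradInner u (boussinesqRHS u) x
        + m / (m + 1) * (u x ^ (m + 1) * lap u x ^ 2)
        + ((m + 2) / (m + 1) * ((m + 3) ^ 2 / 36) - (m ^ 2 - m + 2) / 4)
          * (u x ^ (m - 1) * gradSq u x ^ 2)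
      ≤ divergence (energyFlux u m) x := by
  have hne : ∀ y, u y ≠ 0 := fun y => (hpos y).ne'
  unfold energyFlux
  rw [divergence_sub ?_ ?_, divergence_sub ?_ ?_, divergence_const_mul ?_,
    divergence_const_mul ?_, divergence_const_mul ?_,
    divergence_rpow_mul_mul_grad hu hu.boussinesqRHS (hne x),
    divergence_rpow_mul_mul_grad hu hu.gradSq (hne x),
    divergence_rpow_mul_gradLap_sub_hessGrad hu (hne x),
    gradInner_gradSq fun i => (hu.pder i).differentiable (by simp) x,
    gradInner_comm (boussinesqRHS u)]
  · have hm0 : u x ^ m = u x ^ (m - 1) * u x := by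
      rw [← Real.rpow_add_one (hne x)]; ring_nf
    have hm1 : u x ^ (m + 1) = u x ^ (m - 1) * u x * u x := by
      rw [Real.rpow_add_one (hne x), hm0]
    rw [hm1, hm0, boussinesqRHS]
    have hQ := dissipation_form_nonneg (a := u x) (m := m) (L := lap u x) (hessSq_nonneg u x)
      (hessQuad_sq_le u x)
    have hp : 0 ≤ u x ^ (m - 1) := Real.rpow_nonneg (hpos x).le _
    have hκ : 0 ≤ (m + 2) / (27 * (m + 1)) := div_nonneg (by linarith) (by linarith)
    have hm1 : m + 1 ≠ 0 := by linarith
    refine sub_nonneg.1 ((mul_nonneg (mul_nonneg hκ hp) hQ).trans_eq ?_)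
    generalize u x ^ (m - 1) = p
    field_simp
    ring
  all_goals
    intro i
    exact (by fun_prop (disch := exact hne) : ContDiff ℝ ∞ _).differentiable (by simp) x

theorem setIntegral_energyDissipation_nonpos (hu : ContDiff ℝ ∞ u) (hper : ZPeriodic u)
    (hpos : ∀ x, 0 < u x) {m : ℝ} (hm : -1 < m) :
    (∫ x in fundDom d, (m * u x ^ (m - 1) * boussinesqRHS u x * gradSq u x
        + 2 * u x ^ m * gradInner u (boussinesqRHS u) x))
      + m / (m + 1) * (∫ x in fundDom d, u x ^ (m + 1) * lap u x ^ 2)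
      + ((m + 2) / (m + 1) * ((m + 3) ^ 2 / 36) - (m ^ 2 - m + 2) / 4)
        * (∫ x in fundDom d, u x ^ (m - 1) * gradSq u x ^ 2)
      ≤ 0 := by
  have hne : ∀ y, u y ≠ 0 := fun y => (hpos y).ne'
  have hflux := contDiff_energyFlux hu hpos m
  have hdiv : IntegrableOn (divergence (energyFlux u m)) (fundDom d) :=
    (continuous_finsetSum _ fun i _ => ((hflux i).pder i).continuous).integrableOn_fundDom
  rw [← integral_const_mul, ← integral_const_mul, ← integral_add ?_ ?_,
    ← integral_add ?_ ?_]
  calc _ ≤ ∫ x in fundDom d, divergence (energyFlux u m) x :=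
        setIntegral_mono_on ?_ hdiv measurableSet_fundDom
          fun x _ => energyDensity_le_divergence_energyFlux hu hpos hm x
    _ = 0 := integral_fundDom_divergence_eq_zero (fun i => (hflux i).of_le (by simp))
        (fun i => hper.energyFlux hu m i)
  all_goals
    refine Continuous.integrableOn_fundDom (ContDiff.continuous (𝕜 := ℝ) (n := ∞) ?_)
    fun_prop (disch := exact hne)

end Dissipation

theorem boussinesq_hm_gradsq_decay_general (d : ℕ) (m : ℝ)
    (hm1 : 0 ≤ m) (hm2 : m ≤ (1 + Real.sqrt 7) / 2)
    (T : ℝ) (h : ℝ × EuclideanSpace ℝ (Fin d) → ℝ)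
    (hsm : ContDiff ℝ (⊤ : ℕ∞) h)
    (hper : ∀ t, ZPeriodic (fun x => h (t, x)))
    (hpos : ∀ t x, 0 < h (t, x))
    (heq : ∀ t ∈ Set.Icc (0 : ℝ) T, ∀ x,
      deriv (fun s => h (s, x)) t
        - (∑ i, pder i (fun y => h (t, y) * pder i (fun z => h (t, z)) y) x) = 0) :
    0 ≤ ((m + 2) / (m + 1)) * ((m + 3) ^ 2 / 36) - (m ^ 2 - m + 2) / 4
    ∧ ∀ t ∈ Set.Icc (0 : ℝ) T,
      deriv (fun s =>
          ∫ x in fundDom d, h (s, x) ^ m * gradSq (fun y => h (s, y)) x) t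
        + (m / (m + 1)) *
          (∫ x in fundDom d, h (t, x) ^ (m + 1) * (lap (fun z => h (t, z)) x) ^ 2)
        + (((m + 2) / (m + 1)) * ((m + 3) ^ 2 / 36) - (m ^ 2 - m + 2) / 4) *
          (∫ x in fundDom d,
            h (t, x) ^ (m - 1) * (gradSq (fun z => h (t, z)) x) ^ 2)
        ≤ 0 := by
  refine ⟨boussinesqConst_nonneg hm1 hm2, fun t ht => ?_⟩
  have hu : ContDiff ℝ ∞ fun y => h (t, y) := hsm.comp (contDiff_const.prodMk contDiff_id)
  have hrate : (fun y => deriv (fun s => h (s, y)) t) = boussinesqRHS fun y => h (t, y) :=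
    funext fun y => (sub_eq_zero.1 (heq t ht y)).trans (divergence_mul_grad_self hu y)
  have henergy := (hasDerivAt_setIntegral_of_contDiff (μ := volume) measurableSet_fundDom
    isCompact_toLp_Icc fundDom_subset_toLp_Icc
    ((contDiff_rpow_mul_gradSq_slice hsm hpos m).of_le (by simp)) t).deriv
  have hslice : ∀ x, deriv (fun s => h (s, x) ^ m * gradSq (fun y => h (s, y)) x) t
      = m * h (t, x) ^ (m - 1) * boussinesqRHS (fun y => h (t, y)) x * gradSq (fun y => h (t, y)) x
        + 2 * h (t, x) ^ m * gradInner (fun y => h (t, y)) (boussinesqRHS fun y => h (t, y)) x :=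
    fun x => hrate ▸
      (hasDerivAt_rpow_mul_gradSq_slice (hsm.of_le (WithTop.coe_le_coe.2 le_top)) hpos m t x).deriv
  rw [henergy, setIntegral_congr_fun measurableSet_fundDom fun x _ => hslice x]
  exact setIntegral_energyDissipation_nonpos hu (hper t) (hpos t) (by linarith)

/-- Dissipation estimate for `∫ hᵐ|∇h|²` along the Boussinesq equation
`∂ₜh − div(h∇h) = 0` on `𝕋^d`, for `0 ≤ m ≤ (1+√7)/2`, with
`C_m = ((m+2)/(m+1))·((m+3)²/36) − (m² − m + 2)/4 ≥ 0` (Proposition `convexporous`). -/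
theorem boussinesq_hm_gradsq_decay (d : ℕ) (hd : 1 ≤ d) (m : ℝ)
    (hm1 : 0 ≤ m) (hm2 : m ≤ (1 + Real.sqrt 7) / 2)
    (T : ℝ) (h : ℝ × EuclideanSpace ℝ (Fin d) → ℝ)
    (hsm : ContDiff ℝ (⊤ : ℕ∞) h)
    (hper : ∀ t, ZPeriodic (fun x => h (t, x)))
    (hpos : ∀ t x, 0 < h (t, x))
    (heq : ∀ t ∈ Set.Icc (0 : ℝ) T, ∀ x,
      deriv (fun s => h (s, x)) t
        - (∑ i, pder i (fun y => h (t, y) * pder i (fun z => h (t, z)) y) x) = 0) :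
    0 ≤ ((m + 2) / (m + 1)) * ((m + 3) ^ 2 / 36) - (m ^ 2 - m + 2) / 4
    ∧ ∀ t ∈ Set.Icc (0 : ℝ) T,
      deriv (fun s =>
          ∫ x in fundDom d, h (s, x) ^ m * gradSq (fun y => h (s, y)) x) t
        + (m / (m + 1)) *
          (∫ x in fundDom d, h (t, x) ^ (m + 1) * (lap (fun z => h (t, z)) x) ^ 2)
        + (((m + 2) / (m + 1)) * ((m + 3) ^ 2 / 36) - (m ^ 2 - m + 2) / 4) *
          (∫ x in fundDom d,
            h (t, x) ^ (m - 1) * (gradSq (fun z => h (t, z)) x) ^ 2)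
        ≤ 0 :=
  boussinesq_hm_gradsq_decay_general d m hm1 hm2 T h hsm hper hpos heq
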